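/- arXiv:0802.1121 — 3 statements merged into one kernel-verified Lean document; each statement's English description precedes it below -/
import Mathlib

section
/- Let (u_{σ,τ}) be a time-consistent dynamic concave monetary utility with acceptance sets A_{σ,τ} = {ξ ∈ L^∞(F_τ) : u_{σ,τ}(ξ) ≥ 0} and penalty c_{σ,τ}(Q) = ess sup_{ξ ∈ A_{σ,τ}} E_Q[−ξ | F_σ]. Fix ε > 0 and ξ ∈ A_{0,T} with E_Q[−ξ] > c_{0,T}(Q) − ε. Then for all stopping times σ ≤ τ ≤ T: E_Q[c_{σ,τ}(Q)] ≤ E_Q[u_{σ,T}(ξ) − u_{τ,T}(ξ)] + ε. -/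
/-!
Translation invariance makes `ξ - u_{τ,T}(ξ)` acceptable on `[τ, T]`, and
time consistency makes `u_{σ,T}(ξ)` acceptable on `[0, σ]`, so by the tower property
`E_Q[c_{τ,T}] ≥ E_Q[u_{τ,T}(ξ) - ξ]` and `E_Q[c_{0,σ}] ≥ -E_Q[u_{σ,T}(ξ)]`. Subtracting both from the
cocycle identity for `c_{0,T}` and using `E_Q[-ξ] > E_Q[c_{0,T}] - ε` leaves the claim.
-/

open MeasureTheory

variable {Ω : Type*} {m : MeasurableSpace Ω}

/-- `ξ ∈ L^∞(F_σ)` for a stopping time `σ`: bounded and `F_σ`-measurable. -/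
def MemLinfty {ℱ : Filtration ℝ m} {σ : Ω → ℝ} (hσ : IsStoppingTime ℱ (fun ω => (σ ω : WithTop ℝ)))
    (ξ : Ω → ℝ) : Prop :=
  StronglyMeasurable[hσ.measurableSpace] ξ ∧ ∃ M : ℝ, ∀ ω, |ξ ω| ≤ M

namespace MemLinfty

variable {ℱ : Filtration ℝ m} {σ : Ω → ℝ} {hσ : IsStoppingTime ℱ (fun ω => (σ ω : WithTop ℝ))}
  {ξ η : Ω → ℝ}

lemma neg (h : MemLinfty hσ ξ) : MemLinfty hσ (-ξ) := by
  obtain ⟨hm, M, hM⟩ := h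
  exact ⟨hm.neg, M, fun ω => by simpa using hM ω⟩

lemma sub (hξ : MemLinfty hσ ξ) (hη : MemLinfty hσ η) : MemLinfty hσ (ξ - η) := by
  obtain ⟨hmξ, M, hM⟩ := hξ
  obtain ⟨hmη, N, hN⟩ := hη
  exact ⟨hmξ.sub hmη, M + N, fun ω => (abs_sub (ξ ω) (η ω)).trans (add_le_add (hM ω) (hN ω))⟩

lemma mono {τ : Ω → ℝ} {hτ : IsStoppingTime ℱ (fun ω => (τ ω : WithTop ℝ))}
    (h : MemLinfty hσ ξ) (hστ : ∀ ω, σ ω ≤ τ ω) : MemLinfty hτ ξ :=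
  ⟨h.1.mono (hσ.measurableSpace_mono hτ fun ω => WithTop.coe_le_coe.mpr (hστ ω)), h.2⟩

lemma integrable (h : MemLinfty hσ ξ) (Q : Measure Ω) [IsFiniteMeasure Q] : Integrable ξ Q := by
  obtain ⟨hm, M, hM⟩ := h
  exact Integrable.mono' (integrable_const M) (hm.mono hσ.measurableSpace_le).aestronglyMeasurable
    (Filter.Eventually.of_forall fun ω => by simpa [Real.norm_eq_abs] using hM ω)

end MemLinfty

lemma integral_le_of_condExp_le {Q : Measure Ω} [IsFiniteMeasure Q] {m' : MeasurableSpace Ω}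
    (hm : m' ≤ m) {f g : Ω → ℝ} (hg : Integrable g Q) (h : Q[f|m'] ≤ᵐ[Q] g) :
    ∫ ω, f ω ∂Q ≤ ∫ ω, g ω ∂Q :=
  (integral_condExp hm).symm.trans_le (integral_mono_ae integrable_condExp hg h)

theorem penalty_expectation_estimate_general
    (Q : Measure Ω) [IsProbabilityMeasure Q]
    (ℱ : Filtration ℝ m) (T : ℝ) (hT : 0 < T)
    -- the dynamic utility `u σ τ ξ` and the penalty `c σ τ`
    (u : (Ω → ℝ) → (Ω → ℝ) → (Ω → ℝ) → Ω → ℝ)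
    (c : (Ω → ℝ) → (Ω → ℝ) → Ω → ℝ)
    -- `u σ τ` maps `L^∞(F_τ)` into `L^∞(F_σ)`
    (humap : ∀ (σ τ : Ω → ℝ) (hσ : IsStoppingTime ℱ (fun ω => (σ ω : WithTop ℝ))) (hτ : IsStoppingTime ℱ (fun ω => (τ ω : WithTop ℝ))),
      (∀ ω, σ ω ≤ τ ω) → ∀ ξ, MemLinfty hτ ξ → MemLinfty hσ (u σ τ ξ))
    -- translation invariance
    (htransl : ∀ (σ τ : Ω → ℝ) (hσ : IsStoppingTime ℱ (fun ω => (σ ω : WithTop ℝ))) (hτ : IsStoppingTime ℱ (fun ω => (τ ω : WithTop ℝ))),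
      ∀ ξ η : Ω → ℝ, MemLinfty hτ ξ → MemLinfty hσ η →
      u σ τ (ξ + η) =ᵐ[Q] u σ τ ξ + η)
    -- time-consistency
    (htc : ∀ (σ τ υ : Ω → ℝ), IsStoppingTime ℱ (fun ω => (σ ω : WithTop ℝ)) → IsStoppingTime ℱ (fun ω => (τ ω : WithTop ℝ)) →
      IsStoppingTime ℱ (fun ω => (υ ω : WithTop ℝ)) → (∀ ω, σ ω ≤ τ ω) → (∀ ω, τ ω ≤ υ ω) →
      (∀ ω, υ ω ∈ Set.Icc (0 : ℝ) T) →
      ∀ ξ : Ω → ℝ, u σ υ ξ =ᵐ[Q] u σ τ (u τ υ ξ))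
    -- `c σ τ` is the essential supremum over the acceptance set `A_{σ,τ}`
    (hcint : ∀ σ τ : Ω → ℝ, Integrable (c σ τ) Q)
    (hcub : ∀ (σ τ : Ω → ℝ) (hσ : IsStoppingTime ℱ (fun ω => (σ ω : WithTop ℝ))) (hτ : IsStoppingTime ℱ (fun ω => (τ ω : WithTop ℝ))),
      ∀ ξ : Ω → ℝ, MemLinfty hτ ξ → 0 ≤ᵐ[Q] u σ τ ξ →
      Q[fun ω => -ξ ω | hσ.measurableSpace] ≤ᵐ[Q] c σ τ)
    -- cocycle property of the penalty (in expectation)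
    (hcocycle : ∀ (σ τ : Ω → ℝ), IsStoppingTime ℱ (fun ω => (σ ω : WithTop ℝ)) → IsStoppingTime ℱ (fun ω => (τ ω : WithTop ℝ)) →
      (∀ ω, σ ω ≤ τ ω) → (∀ ω, τ ω ∈ Set.Icc (0 : ℝ) T) →
      ∫ ω, c (fun _ => (0 : ℝ)) (fun _ => T) ω ∂Q =
        ∫ ω, c (fun _ => (0 : ℝ)) σ ω ∂Q + ∫ ω, c σ τ ω ∂Q +
          ∫ ω, c τ (fun _ => T) ω ∂Q)
    -- the `ε`-optimizer `ξ ∈ A_{0,T}`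
    (ε : ℝ) (ξ : Ω → ℝ)
    (hξmem : MemLinfty (isStoppingTime_const ℱ T) ξ)
    (hξacc : 0 ≤ᵐ[Q] u (fun _ => (0 : ℝ)) (fun _ => T) ξ)
    (hξopt : ∫ ω, c (fun _ => (0 : ℝ)) (fun _ => T) ω ∂Q - ε < ∫ ω, -ξ ω ∂Q) :
    ∀ (σ τ : Ω → ℝ), IsStoppingTime ℱ (fun ω => (σ ω : WithTop ℝ)) → IsStoppingTime ℱ (fun ω => (τ ω : WithTop ℝ)) →
      (∀ ω, σ ω ≤ τ ω) → (∀ ω, τ ω ∈ Set.Icc (0 : ℝ) T) → (∀ ω, 0 ≤ σ ω) →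
      ∫ ω, c σ τ ω ∂Q ≤
        ∫ ω, (u σ (fun _ => T) ξ ω - u τ (fun _ => T) ξ ω) ∂Q + ε := by
  intro σ τ hσ hτ hστ hτIcc hσ0
  have hT' : IsStoppingTime ℱ (fun _ => (T : WithTop ℝ)) := isStoppingTime_const ℱ T
  have h0 : IsStoppingTime ℱ (fun _ => ((0 : ℝ) : WithTop ℝ)) := isStoppingTime_const ℱ 0
  have hτT : ∀ ω, τ ω ≤ T := fun ω => (hτIcc ω).2
  have hσT : ∀ ω, σ ω ≤ T := fun ω => (hστ ω).trans (hτT ω)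
  have huσ := humap σ _ hσ hT' hσT ξ hξmem
  have huτ := humap τ _ hτ hT' hτT ξ hξmem
  have hτ_acc : 0 ≤ᵐ[Q] u τ (fun _ => T) (ξ - u τ (fun _ => T) ξ) := by
    filter_upwards [htransl τ _ hτ hT' ξ _ hξmem huτ.neg] with ω hω
    simp [sub_eq_add_neg, hω]
  have hσ_acc : 0 ≤ᵐ[Q] u (fun _ => 0) σ (u σ (fun _ => T) ξ) := by
    filter_upwards [htc _ σ _ h0 hσ hT' hσ0 hσT (fun _ => ⟨hT.le, le_rfl⟩) ξ, hξacc] with ω h1 h2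
    exact h1 ▸ h2
  have hcτT : ∫ ω, (u τ (fun _ => T) ξ ω - ξ ω) ∂Q ≤ ∫ ω, c τ (fun _ => T) ω ∂Q := by
    simpa only [Pi.sub_apply, neg_sub] using integral_le_of_condExp_le hτ.measurableSpace_le
      (hcint τ _) (hcub τ _ hτ hT' _ (hξmem.sub (huτ.mono hτT)) hτ_acc)
  have hc0σ : ∫ ω, -u σ (fun _ => T) ξ ω ∂Q ≤ ∫ ω, c (fun _ => 0) σ ω ∂Q :=
    integral_le_of_condExp_le h0.measurableSpace_le (hcint _ σ) (hcub _ σ h0 hσ _ huσ hσ_acc)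
  rw [integral_sub (huτ.integrable Q) (hξmem.integrable Q)] at hcτT
  rw [integral_neg] at hc0σ hξopt
  rw [integral_sub (huσ.integrable Q) (huτ.integrable Q)]
  linarith [hcocycle σ τ hσ hτ hστ hτIcc]

/-- for a time-consistent dynamic concave monetary utility with penalty
`c`, if `ξ ∈ A_{0,T}` is an `ε`-optimizer of `c_{0,T}(Q)`, then for all stopping times
`σ ≤ τ ≤ T` one has `E_Q[c_{σ,τ}] ≤ E_Q[u_{σ,T}(ξ) − u_{τ,T}(ξ)] + ε`. -/
theorem penalty_expectation_estimate
    (Q : Measure Ω) [IsProbabilityMeasure Q]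
    (ℱ : Filtration ℝ m) (T : ℝ) (hT : 0 < T)
    -- the dynamic utility `u σ τ ξ` and the penalty `c σ τ`
    (u : (Ω → ℝ) → (Ω → ℝ) → (Ω → ℝ) → Ω → ℝ)
    (c : (Ω → ℝ) → (Ω → ℝ) → Ω → ℝ)
    -- `u σ τ` maps `L^∞(F_τ)` into `L^∞(F_σ)`
    (humap : ∀ (σ τ : Ω → ℝ) (hσ : IsStoppingTime ℱ (fun ω => (σ ω : WithTop ℝ))) (hτ : IsStoppingTime ℱ (fun ω => (τ ω : WithTop ℝ))),
      (∀ ω, σ ω ≤ τ ω) → ∀ ξ, MemLinfty hτ ξ → MemLinfty hσ (u σ τ ξ))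
    -- monotonicity
    (hmono : ∀ (σ τ : Ω → ℝ), IsStoppingTime ℱ (fun ω => (σ ω : WithTop ℝ)) → IsStoppingTime ℱ (fun ω => (τ ω : WithTop ℝ)) →
      ∀ ξ η : Ω → ℝ, ξ ≤ᵐ[Q] η → u σ τ ξ ≤ᵐ[Q] u σ τ η)
    -- translation invariance
    (htransl : ∀ (σ τ : Ω → ℝ) (hσ : IsStoppingTime ℱ (fun ω => (σ ω : WithTop ℝ))) (hτ : IsStoppingTime ℱ (fun ω => (τ ω : WithTop ℝ))),
      ∀ ξ η : Ω → ℝ, MemLinfty hτ ξ → MemLinfty hσ η →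
      u σ τ (ξ + η) =ᵐ[Q] u σ τ ξ + η)
    -- concavity
    (hconc : ∀ (σ τ : Ω → ℝ), IsStoppingTime ℱ (fun ω => (σ ω : WithTop ℝ)) → IsStoppingTime ℱ (fun ω => (τ ω : WithTop ℝ)) →
      ∀ (ξ η : Ω → ℝ) (a : ℝ), 0 ≤ a → a ≤ 1 →
      (fun ω => a * u σ τ ξ ω + (1 - a) * u σ τ η ω) ≤ᵐ[Q]
        u σ τ (fun ω => a * ξ ω + (1 - a) * η ω))
    -- normalization
    (hzero : ∀ σ τ : Ω → ℝ, u σ τ 0 =ᵐ[Q] 0)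
    -- time-consistency
    (htc : ∀ (σ τ υ : Ω → ℝ), IsStoppingTime ℱ (fun ω => (σ ω : WithTop ℝ)) → IsStoppingTime ℱ (fun ω => (τ ω : WithTop ℝ)) →
      IsStoppingTime ℱ (fun ω => (υ ω : WithTop ℝ)) → (∀ ω, σ ω ≤ τ ω) → (∀ ω, τ ω ≤ υ ω) →
      (∀ ω, υ ω ∈ Set.Icc (0 : ℝ) T) →
      ∀ ξ : Ω → ℝ, u σ υ ξ =ᵐ[Q] u σ τ (u τ υ ξ))
    -- `c σ τ` is the essential supremum over the acceptance set `A_{σ,τ}`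
    (hcint : ∀ σ τ : Ω → ℝ, Integrable (c σ τ) Q)
    (hcub : ∀ (σ τ : Ω → ℝ) (hσ : IsStoppingTime ℱ (fun ω => (σ ω : WithTop ℝ))) (hτ : IsStoppingTime ℱ (fun ω => (τ ω : WithTop ℝ))),
      ∀ ξ : Ω → ℝ, MemLinfty hτ ξ → 0 ≤ᵐ[Q] u σ τ ξ →
      Q[fun ω => -ξ ω | hσ.measurableSpace] ≤ᵐ[Q] c σ τ)
    (hclub : ∀ (σ τ : Ω → ℝ) (hσ : IsStoppingTime ℱ (fun ω => (σ ω : WithTop ℝ))) (hτ : IsStoppingTime ℱ (fun ω => (τ ω : WithTop ℝ))),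
      ∀ b : Ω → ℝ,
      (∀ ξ : Ω → ℝ, MemLinfty hτ ξ → 0 ≤ᵐ[Q] u σ τ ξ →
        Q[fun ω => -ξ ω | hσ.measurableSpace] ≤ᵐ[Q] b) →
      c σ τ ≤ᵐ[Q] b)
    -- cocycle property of the penalty (in expectation)
    (hcocycle : ∀ (σ τ : Ω → ℝ), IsStoppingTime ℱ (fun ω => (σ ω : WithTop ℝ)) → IsStoppingTime ℱ (fun ω => (τ ω : WithTop ℝ)) →
      (∀ ω, σ ω ≤ τ ω) → (∀ ω, τ ω ∈ Set.Icc (0 : ℝ) T) →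
      ∫ ω, c (fun _ => (0 : ℝ)) (fun _ => T) ω ∂Q =
        ∫ ω, c (fun _ => (0 : ℝ)) σ ω ∂Q + ∫ ω, c σ τ ω ∂Q +
          ∫ ω, c τ (fun _ => T) ω ∂Q)
    -- the `ε`-optimizer `ξ ∈ A_{0,T}`
    (ε : ℝ) (hε : 0 < ε) (ξ : Ω → ℝ)
    (hξmem : MemLinfty (isStoppingTime_const ℱ T) ξ)
    (hξacc : 0 ≤ᵐ[Q] u (fun _ => (0 : ℝ)) (fun _ => T) ξ)
    (hξopt : ∫ ω, c (fun _ => (0 : ℝ)) (fun _ => T) ω ∂Q - ε < ∫ ω, -ξ ω ∂Q) :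
    ∀ (σ τ : Ω → ℝ), IsStoppingTime ℱ (fun ω => (σ ω : WithTop ℝ)) → IsStoppingTime ℱ (fun ω => (τ ω : WithTop ℝ)) →
      (∀ ω, σ ω ≤ τ ω) → (∀ ω, τ ω ∈ Set.Icc (0 : ℝ) T) → (∀ ω, 0 ≤ σ ω) →
      ∫ ω, c σ τ ω ∂Q ≤
        ∫ ω, (u σ (fun _ => T) ξ ω - u τ (fun _ => T) ξ ω) ∂Q + ε :=
  penalty_expectation_estimate_general Q ℱ T hT u c humap htransl htc hcint hcub hcocycle ε ξ hξmem
    hξacc hξopt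
end

section
/- Let Q ∼ P with c_{0,T}(Q) < ∞, where c_{0,T} : {probabilities ≪ P} → [0,∞] is lower semicontinuous with respect to L^1-convergence of densities and satisfies the cocycle property c_{0,T}(Q) = c_{0,τ}(Q) + E_Q[c_{τ,T}(Q)]. If (τ_n) is a sequence of stopping times with P(τ_n < T) → 0, and Q^{τ_n} is defined by dQ^{τ_n}/dP = E_P[dQ/dP | F_{τ_n}], then c_{0,T}(Q^{τ_n}) → c_{0,T}(Q), and moreover c_{0,T}(Q^{τ_n}) ≤ c_{0,T}(Q) for all n. -/
/-!
By the cocycle identity, stopping the density can only lower the penalty. Conversely, on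
`{τₙ = T}` the stopped density `E[Z | ℱ_{τₙ}]` coincides with `Z`, so their `L¹` distance is at
most `2 ∫_{τₙ < T} |Z|`, which tends to zero by absolute continuity of the integral; lower
semicontinuity then bounds `c Z` by the `liminf` of the stopped penalties.
-/

open MeasureTheory Filter Topology
open scoped ENNReal

theorem integral_abs_condExp_sub_le_of_ae_eq_restrict {Ω : Type*} {m m₀ : MeasurableSpace Ω}
    {μ : Measure Ω} {f : Ω → ℝ} {s : Set Ω} (hf : Integrable f μ) (hs : MeasurableSet[m] s)
    (hm : m ≤ m₀) (hfs : μ[f | m] =ᵐ[μ.restrict s] f) :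
    ∫ ω, |μ[f | m] ω - f ω| ∂μ ≤ 2 * ∫ ω in sᶜ, |f ω| ∂μ := by
  have hint : Integrable (fun ω => |μ[f | m] ω - f ω|) μ := (integrable_condExp.sub hf).abs
  have hon : ∫ ω in s, |μ[f | m] ω - f ω| ∂μ = 0 :=
    integral_eq_zero_of_ae (hfs.mono fun ω hω => by simp [hω])
  calc ∫ ω, |μ[f | m] ω - f ω| ∂μ
      = ∫ ω in sᶜ, |μ[f | m] ω - f ω| ∂μ := by
        rw [← integral_add_compl (hm s hs) hint, hon, zero_add]
    _ ≤ ∫ ω in sᶜ, (|μ[f | m] ω| + |f ω|) ∂μ :=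
        integral_mono hint.integrableOn (integrable_condExp.abs.add hf.abs).integrableOn
          fun ω => abs_sub _ _
    _ = ∫ ω in sᶜ, |μ[f | m] ω| ∂μ + ∫ ω in sᶜ, |f ω| ∂μ :=
        integral_add integrable_condExp.abs.integrableOn hf.abs.integrableOn
    _ ≤ 2 * ∫ ω in sᶜ, |f ω| ∂μ := by
        linarith [setIntegral_abs_condExp_le (μ := μ) hs.compl f]

theorem condExp_stopping_time_ae_eq_restrict_eq_self {Ω ι : Type*} {m : MeasurableSpace Ω}
    {μ : Measure Ω} [LinearOrder ι] [TopologicalSpace ι] [OrderTopology ι]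
    [FirstCountableTopology ι] {ℱ : Filtration ι m} [SigmaFiniteFiltration μ ℱ]
    {τ : Ω → WithTop ι} (hτ : IsStoppingTime ℱ τ) [SigmaFinite (μ.trim hτ.measurableSpace_le)]
    {i : ι} {f : Ω → ℝ} (hf : StronglyMeasurable[ℱ i] f) (hfi : Integrable f μ) :
    μ[f | hτ.measurableSpace] =ᵐ[μ.restrict {ω | τ ω = i}] f := by
  refine (condExp_stopping_time_ae_eq_restrict_eq (f := f) hτ i).trans ?_
  rw [condExp_of_stronglyMeasurable (ℱ.le i) hf hfi]

theorem tendsto_integral_abs_condExp_stopping_time_sub {Ω ι : Type*} {m : MeasurableSpace Ω}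
    {μ : Measure Ω} [IsFiniteMeasure μ] [LinearOrder ι] [TopologicalSpace ι] [OrderTopology ι]
    [FirstCountableTopology ι] {ℱ : Filtration ι m} {T : ι} {f : Ω → ℝ}
    (hf : StronglyMeasurable[ℱ T] f) (hfi : Integrable f μ) {τ : ℕ → Ω → ι}
    (hτ : ∀ n, IsStoppingTime ℱ (fun ω => (τ n ω : WithTop ι))) (hτT : ∀ n ω, τ n ω ≤ T)
    (hτlim : Tendsto (fun n => μ {ω | τ n ω < T}) atTop (𝓝 0)) :
    Tendsto (fun n => ∫ ω, |μ[f | (hτ n).measurableSpace] ω - f ω| ∂μ) atTop (𝓝 0) := by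
  have hcompl : ∀ n, {ω | (τ n ω : WithTop ι) = T}ᶜ = {ω | τ n ω < T} := fun n => by
    ext ω
    simp [(hτT n ω).lt_iff_ne]
  have hbound : Tendsto (fun n => 2 * ∫ ω in {ω | τ n ω < T}, |f ω| ∂μ) atTop (𝓝 0) := by
    simpa using (hfi.abs.tendsto_setIntegral_nhds_zero hτlim).const_mul 2
  refine squeeze_zero (fun n => integral_nonneg fun ω => abs_nonneg _) (fun n => ?_) hbound
  rw [← hcompl n]
  exact integral_abs_condExp_sub_le_of_ae_eq_restrict hfi ((hτ n).measurableSet_eq' T)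
    (hτ n).measurableSpace_le (condExp_stopping_time_ae_eq_restrict_eq_self (hτ n) hf hfi)

theorem penalty_of_stopped_measures_tendsto_general
    {Ω : Type*} {m : MeasurableSpace Ω} (P : Measure Ω) [IsProbabilityMeasure P]
    (ℱ : Filtration ℝ m) (T : ℝ)
    (c : (Ω → ℝ) → ℝ≥0∞)
    -- the density `Z = dQ/dP` of a probability `Q ∼ P`, measurable at the horizon
    (Z : Ω → ℝ)
    (hZmeas : StronglyMeasurable[ℱ T] Z) (hZint : Integrable Z P)
    -- lower semicontinuity of `c` with respect to `L¹(P)`-convergence of densities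
    (hlsc : ∀ (W : ℕ → Ω → ℝ) (Wlim : Ω → ℝ),
      Tendsto (fun n => ∫ ω, |W n ω - Wlim ω| ∂P) atTop (nhds 0) →
      c Wlim ≤ liminf (fun n => c (W n)) atTop)
    -- cocycle property: `c(Q) = c(Q^τ) + E_Q[c_{τ,T}(Q)]` with a nonnegative remainder
    (hcocycle : ∀ (τ : Ω → ℝ) (hτ : IsStoppingTime ℱ (fun ω => (τ ω : WithTop ℝ))),
      (∀ ω, τ ω ∈ Set.Icc (0 : ℝ) T) →
      ∃ r : ℝ≥0∞, c Z = c (P[Z | hτ.measurableSpace]) + r)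
    -- the sequence of stopping times
    (τ : ℕ → Ω → ℝ) (hτ : ∀ n, IsStoppingTime ℱ (fun ω => (τ n ω : WithTop ℝ)))
    (hτT : ∀ n ω, τ n ω ∈ Set.Icc (0 : ℝ) T)
    (hτlim : Tendsto (fun n => P {ω | τ n ω < T}) atTop (nhds 0)) :
    (∀ n, c (P[Z | (hτ n).measurableSpace]) ≤ c Z) ∧
    Tendsto (fun n => c (P[Z | (hτ n).measurableSpace])) atTop (nhds (c Z)) := by
  have hle : ∀ n, c (P[Z | (hτ n).measurableSpace]) ≤ c Z := fun n => by
    obtain ⟨r, hr⟩ := hcocycle (τ n) (hτ n) (hτT n)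
    exact hr ▸ le_self_add
  have hL1 := tendsto_integral_abs_condExp_stopping_time_sub hZmeas hZint hτ
    (fun n ω => (hτT n ω).2) hτlim
  refine ⟨hle, tendsto_of_le_liminf_of_limsup_le (hlsc _ Z hL1) ?_⟩
  exact limsup_le_of_le (by isBoundedDefault) (Eventually.of_forall hle)

/-- if `c_{0,T}` is `L¹`-lower semicontinuous on densities, satisfies the
cocycle property (so that stopping the density decreases the penalty), and
`c_{0,T}(Q) < ∞`, then for stopping times `τ_n` with `P(τ_n < T) → 0` the stopped
measures `Q^{τ_n}` (with density `E_P[dQ/dP | F_{τ_n}]`) satisfy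
`c_{0,T}(Q^{τ_n}) ≤ c_{0,T}(Q)` and `c_{0,T}(Q^{τ_n}) → c_{0,T}(Q)`. -/
theorem penalty_of_stopped_measures_tendsto
    {Ω : Type*} {m : MeasurableSpace Ω} (P : Measure Ω) [IsProbabilityMeasure P]
    (ℱ : Filtration ℝ m) (T : ℝ) (hT : 0 < T)
    (c : (Ω → ℝ) → ℝ≥0∞)
    -- the density `Z = dQ/dP` of a probability `Q ∼ P`, measurable at the horizon
    (Z : Ω → ℝ)
    (hZmeas : StronglyMeasurable[ℱ T] Z) (hZint : Integrable Z P)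
    (hZpos : ∀ᵐ ω ∂P, 0 < Z ω) (hZone : ∫ ω, Z ω ∂P = 1)
    (hfin : c Z < ∞)
    -- lower semicontinuity of `c` with respect to `L¹(P)`-convergence of densities
    (hlsc : ∀ (W : ℕ → Ω → ℝ) (Wlim : Ω → ℝ),
      Tendsto (fun n => ∫ ω, |W n ω - Wlim ω| ∂P) atTop (nhds 0) →
      c Wlim ≤ liminf (fun n => c (W n)) atTop)
    -- cocycle property: `c(Q) = c(Q^τ) + E_Q[c_{τ,T}(Q)]` with a nonnegative remainder
    (hcocycle : ∀ (τ : Ω → ℝ) (hτ : IsStoppingTime ℱ (fun ω => (τ ω : WithTop ℝ))),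
      (∀ ω, τ ω ∈ Set.Icc (0 : ℝ) T) →
      ∃ r : ℝ≥0∞, c Z = c (P[Z | hτ.measurableSpace]) + r)
    -- the sequence of stopping times
    (τ : ℕ → Ω → ℝ) (hτ : ∀ n, IsStoppingTime ℱ (fun ω => (τ n ω : WithTop ℝ)))
    (hτT : ∀ n ω, τ n ω ∈ Set.Icc (0 : ℝ) T)
    (hτlim : Tendsto (fun n => P {ω | τ n ω < T}) atTop (nhds 0)) :
    (∀ n, c (P[Z | (hτ n).measurableSpace]) ≤ c Z) ∧
    Tendsto (fun n => c (P[Z | (hτ n).measurableSpace])) atTop (nhds (c Z)) :=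
  penalty_of_stopped_measures_tendsto_general P ℱ T c Z hZmeas hZint hlsc hcocycle τ hτ hτT hτlim
end

section
/- Let c : L^1(P)_{≥0,norm 1} → [0,∞] be lower semicontinuous (in L^1) with c(Z_Q) = E_Q[A_T] for an associated increasing process A whenever c(Z_Q) < ∞, and suppose for predictable sets H the measure Q^H (with Girsanov kernel q·1_H) has increasing process A^H satisfying dA^H ≤ 1_H dA. If A is bounded and H^n ↑ (0,T] × Ω are predictable sets, then c(Q^{H^n}) → c(Q). -/
open MeasureTheory Filter
open scoped ENNReal NNReal

/-! Lower semicontinuity of `c` gives `c(Q) ≤ liminf c(Q^{H^n})`. Conversely, since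
`dA^{H^n} ≤ 1_{H^n} dA ≤ dA` and `A_T ≤ M`,
`c(Q^{H^n}) = E[Z^n A^{H^n}_T] ≤ E[Z A_T] + M ‖Z^n - Z‖_{L¹} = c(Q) + M ‖Z^n - Z‖_{L¹}`,
whose right side tends to `c(Q)`. -/

theorem tendsto_of_le_liminf_of_le_of_tendsto {α β : Type*} [CompleteLinearOrder α]
    [TopologicalSpace α] [OrderTopology α] {l : Filter β} {u v : β → α} {x : α}
    (hlo : x ≤ liminf u l) (huv : u ≤ᶠ[l] v) (hv : Tendsto v l (nhds x)) :
    Tendsto u l (nhds x) := by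
  refine tendsto_order.2 ⟨fun a ha => eventually_lt_of_lt_liminf (ha.trans_le hlo), fun b hb => ?_⟩
  filter_upwards [huv, (tendsto_order.1 hv).2 b hb] with n hn hvn using hn.trans_lt hvn

theorem ENNReal.ofReal_mul_le_ofReal_mul_add {x y : ℝ} {a b M : ℝ≥0∞} (hab : a ≤ b)
    (hbM : b ≤ M) : ENNReal.ofReal x * a ≤ ENNReal.ofReal y * b + M * ENNReal.ofReal |x - y| :=
  calc ENNReal.ofReal x * a
      ≤ (ENNReal.ofReal y + ENNReal.ofReal |x - y|) * b := by
        gcongr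
        exact (ENNReal.ofReal_le_ofReal (by linarith [le_abs_self (x - y)])).trans
          ENNReal.ofReal_add_le
    _ ≤ ENNReal.ofReal y * b + M * ENNReal.ofReal |x - y| := by
        rw [add_mul, mul_comm (ENNReal.ofReal |x - y|)]
        gcongr

theorem lintegral_ofReal_mul_le_add {Ω : Type*} {m : MeasurableSpace Ω} {μ : Measure Ω}
    {f g : Ω → ℝ} {a b : Ω → ℝ≥0∞} {M : ℝ≥0∞} (hfg : Integrable (fun ω => f ω - g ω) μ)
    (hab : ∀ ω, a ω ≤ b ω) (hbM : ∀ ω, b ω ≤ M) :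
    ∫⁻ ω, ENNReal.ofReal (f ω) * a ω ∂μ
      ≤ ∫⁻ ω, ENNReal.ofReal (g ω) * b ω ∂μ + M * ENNReal.ofReal (∫ ω, |f ω - g ω| ∂μ) := by
  have hdist : ENNReal.ofReal (∫ ω, |f ω - g ω| ∂μ) = ∫⁻ ω, ENNReal.ofReal |f ω - g ω| ∂μ :=
    ofReal_integral_eq_lintegral_ofReal hfg.abs (.of_forall fun _ => abs_nonneg _)
  have hmeas : AEMeasurable (fun ω => ENNReal.ofReal |f ω - g ω|) μ :=
    ENNReal.measurable_ofReal.comp_aemeasurable hfg.abs.aemeasurable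
  rw [hdist, ← lintegral_const_mul'' _ hmeas]
  calc ∫⁻ ω, ENNReal.ofReal (f ω) * a ω ∂μ
      ≤ ∫⁻ ω, (ENNReal.ofReal (g ω) * b ω + M * ENNReal.ofReal |f ω - g ω|) ∂μ :=
        lintegral_mono fun ω => ENNReal.ofReal_mul_le_ofReal_mul_add (hab ω) (hbM ω)
    _ = _ := lintegral_add_right' _ (hmeas.const_mul _)

theorem penalty_tendsto_along_exhaustion_general
    {Ω : Type*} {m : MeasurableSpace Ω} (μ : Measure Ω)
    (T : ℝ)
    (c : (Ω → ℝ) → ℝ≥0∞)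
    -- densities of `Q^{H^n}` and of `Q`
    (Z : ℕ → Ω → ℝ) (Zlim : Ω → ℝ)
    (hZint : ∀ n, Integrable (Z n) μ) (hZlimint : Integrable Zlim μ)
    (hL1 : Tendsto (fun n => ∫ ω, |Z n ω - Zlim ω| ∂μ) atTop (nhds 0))
    -- the predictable exhaustion `H^n ↑ (0,T] × Ω`
    (H : ℕ → Set (ℝ × Ω))
    -- the increasing process of `Q` (as a Stieltjes measure kernel), bounded
    (A : Ω → Measure ℝ) (M : ℝ≥0)
    (hAbdd : ∀ ω, A ω (Set.Ioc 0 T) ≤ M)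
    -- the increasing processes of the `Q^{H^n}`, with `dA^{H^n} ≤ 1_{H^n} dA`
    (AH : ℕ → Ω → Measure ℝ)
    (hAHle : ∀ n ω, ∀ s : Set ℝ, MeasurableSet s →
      AH n ω s ≤ A ω (s ∩ {t : ℝ | (t, ω) ∈ H n}))
    -- `c(Q) = E_Q[A_T]` and `c(Q^{H^n}) = E_{Q^{H^n}}[A^{H^n}_T]`
    (hcZ : c Zlim = ∫⁻ ω, ENNReal.ofReal (Zlim ω) * A ω (Set.Ioc 0 T) ∂μ)
    (hcZn : ∀ n, c (Z n) = ∫⁻ ω, ENNReal.ofReal (Z n ω) * AH n ω (Set.Ioc 0 T) ∂μ)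
    -- `L¹`-lower semicontinuity of `c`
    (hlsc : ∀ (W : ℕ → Ω → ℝ) (Wlim : Ω → ℝ),
      Tendsto (fun n => ∫ ω, |W n ω - Wlim ω| ∂μ) atTop (nhds 0) →
      c Wlim ≤ liminf (fun n => c (W n)) atTop) :
    Tendsto (fun n => c (Z n)) atTop (nhds (c Zlim)) := by
  have hAH_le_A : ∀ n ω, AH n ω (Set.Ioc 0 T) ≤ A ω (Set.Ioc 0 T) := fun n ω =>
    (hAHle n ω _ measurableSet_Ioc).trans (measure_mono Set.inter_subset_left)
  have hupper : ∀ n, c (Z n) ≤ c Zlim + M * ENNReal.ofReal (∫ ω, |Z n ω - Zlim ω| ∂μ) :=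
    fun n => hcZn n ▸ hcZ ▸
      lintegral_ofReal_mul_le_add ((hZint n).sub hZlimint) (hAH_le_A n) hAbdd
  have hbound : Tendsto (fun n => c Zlim + M * ENNReal.ofReal (∫ ω, |Z n ω - Zlim ω| ∂μ))
      atTop (nhds (c Zlim)) := by
    simpa using tendsto_const_nhds.add
      (ENNReal.Tendsto.const_mul (ENNReal.tendsto_ofReal hL1) (.inr ENNReal.coe_ne_top))
  exact tendsto_of_le_liminf_of_le_of_tendsto (hlsc Z Zlim hL1) (.of_forall hupper) hbound

/-- if the penalty `c` is `L¹`-lower semicontinuous on densities, equals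
`E_Q[A_T]` on the density of `Q` (with associated increasing process of bounded total
mass `A ω (0,T]`), and for predictable sets `H` the measure `Q^H` (kernel `q·1_H`, with
density `Z^H`) has increasing process satisfying `dA^H ≤ 1_H dA`, then for predictable
sets `H^n ↑ (0,T] × Ω` one has `c(Q^{H^n}) → c(Q)`. -/
theorem penalty_tendsto_along_exhaustion
    {Ω : Type*} {m : MeasurableSpace Ω} (μ : Measure Ω) [IsProbabilityMeasure μ]
    (T : ℝ) (hT : 0 < T)
    (c : (Ω → ℝ) → ℝ≥0∞)
    -- densities of `Q^{H^n}` and of `Q`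
    (Z : ℕ → Ω → ℝ) (Zlim : Ω → ℝ)
    (hZint : ∀ n, Integrable (Z n) μ) (hZlimint : Integrable Zlim μ)
    (hZnonneg : ∀ n, 0 ≤ᵐ[μ] Z n) (hZpos : ∀ᵐ ω ∂μ, 0 < Zlim ω)
    (hZone : ∀ n, ∫ ω, Z n ω ∂μ = 1) (hZlimone : ∫ ω, Zlim ω ∂μ = 1)
    (hL1 : Tendsto (fun n => ∫ ω, |Z n ω - Zlim ω| ∂μ) atTop (nhds 0))
    -- the predictable exhaustion `H^n ↑ (0,T] × Ω`
    (H : ℕ → Set (ℝ × Ω)) (hHmono : Monotone H)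
    (hHunion : (⋃ n, H n) = Set.Ioc 0 T ×ˢ (Set.univ : Set Ω))
    -- the increasing process of `Q` (as a Stieltjes measure kernel), bounded
    (A : Ω → Measure ℝ) (M : ℝ≥0)
    (hAbdd : ∀ ω, A ω (Set.Ioc 0 T) ≤ M)
    (hAmeas : ∀ s : Set ℝ, MeasurableSet s → Measurable fun ω => A ω s)
    -- the increasing processes of the `Q^{H^n}`, with `dA^{H^n} ≤ 1_{H^n} dA`
    (AH : ℕ → Ω → Measure ℝ)
    (hAHmeas : ∀ n, ∀ s : Set ℝ, MeasurableSet s → Measurable fun ω => AH n ω s)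
    (hAHle : ∀ n ω, ∀ s : Set ℝ, MeasurableSet s →
      AH n ω s ≤ A ω (s ∩ {t : ℝ | (t, ω) ∈ H n}))
    -- `c(Q) = E_Q[A_T]` and `c(Q^{H^n}) = E_{Q^{H^n}}[A^{H^n}_T]`
    (hcZ : c Zlim = ∫⁻ ω, ENNReal.ofReal (Zlim ω) * A ω (Set.Ioc 0 T) ∂μ)
    (hcZn : ∀ n, c (Z n) = ∫⁻ ω, ENNReal.ofReal (Z n ω) * AH n ω (Set.Ioc 0 T) ∂μ)
    (hfin : c Zlim < ∞)
    -- `L¹`-lower semicontinuity of `c`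
    (hlsc : ∀ (W : ℕ → Ω → ℝ) (Wlim : Ω → ℝ),
      Tendsto (fun n => ∫ ω, |W n ω - Wlim ω| ∂μ) atTop (nhds 0) →
      c Wlim ≤ liminf (fun n => c (W n)) atTop) :
    Tendsto (fun n => c (Z n)) atTop (nhds (c Zlim)) :=
  penalty_tendsto_along_exhaustion_general (m := m) μ T c Z Zlim hZint hZlimint hL1 H A M hAbdd AH
    hAHle hcZ hcZn hlsc
end
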